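/- arXiv:0808.0980 — 2 statements merged into one kernel-verified Lean document; each statement's English description precedes it below -/
import Mathlib

section
/- Every Hamiltonian directed path of the digraph H that starts at x1 ends at x2. -/
/-- The six vertices of the gadget digraph `H`. -/
inductive GV : Type
  | x1 | y1 | z1 | x2 | y2 | z2
  deriving DecidableEq

instance instFintypeGV : Fintype GV where
  elems := {GV.x1, GV.y1, GV.z1, GV.x2, GV.y2, GV.z2}
  complete := by intro x; cases x <;> decide

open GV in
/-- The gadget digraph `H` with arcs
x1→y1, y1→z1, z1→x1, x1→x2, y1→y2, z1→z2, x2→z2, z2→y2, y2→x2. -/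
def gadgetH : Digraph GV where
  Adj a b := (a, b) ∈ ([(x1,y1), (y1,z1), (z1,x1), (x1,x2), (y1,y2),
      (z1,z2), (x2,z2), (z2,y2), (y2,x2)] : List (GV × GV))

/-- `l` is a directed path in `D` (a nonrepeating sequence of vertices in which
consecutive vertices are joined by arcs). -/
def Digraph.IsDipath {α : Type} (D : Digraph α) (l : List α) : Prop :=
  l.Chain' D.Adj ∧ l.Nodup

open GV in
instance : DecidableRel gadgetH.Adj := fun a b =>
  inferInstanceAs (Decidable ((a, b) ∈ ([(x1,y1), (y1,z1), (z1,x1), (x1,x2), (y1,y2),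
      (z1,z2), (x2,z2), (z2,y2), (y2,x2)] : List (GV × GV))))

instance (l : List GV) : Decidable (gadgetH.IsDipath l) :=
  inferInstanceAs (Decidable (l.IsChain gadgetH.Adj ∧ l.Nodup))

set_option synthInstance.maxSize 400 in
set_option synthInstance.maxHeartbeats 1000000 in
lemma gadget_key : ∀ a b c d e f : GV,
    gadgetH.Adj a b → gadgetH.Adj b c → gadgetH.Adj c d → gadgetH.Adj d e →
    gadgetH.Adj e f → ([a, b, c, d, e, f] : List GV).Nodup →
    a = GV.x1 → f = GV.x2 := by
  decide

/-- Every Hamiltonian directed path of `H` starting at `x1` ends at `x2`. -/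
theorem gadget_ham_path_from_x1_ends_x2 (l : List GV)
    (hpath : gadgetH.IsDipath l) (hham : ∀ v : GV, v ∈ l)
    (hstart : l.head? = some GV.x1) : l.getLast? = some GV.x2 := by
  have hfin : l.toFinset = (Finset.univ : Finset GV) := by
    ext v; simp [hham]
  have hlen : l.length = 6 := by
    have := List.toFinset_card_of_nodup hpath.2
    rw [hfin] at this
    simpa using this.symm.trans (show Fintype.card GV = 6 from rfl)
  match l, hlen with
  | [a, b, c, d, e, f], _ =>
    have ha : a = GV.x1 := by simpa using hstart
    obtain ⟨hc, hn⟩ := hpath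
    simp only [List.Chain', List.isChain_cons_cons, List.isChain_singleton] at hc
    have hf := gadget_key a b c d e f hc.1 hc.2.1 hc.2.2.1 hc.2.2.2.1 hc.2.2.2.2.1 hn ha
    simp [List.getLast?, hf]
end

section
/- For every 3SAT instance I with variables v^1, …, v^k, every out-branching B of the digraph D(I) is rooted at r, contains all arcs (r, u_i) for i = 1, …, k, and has at least k leaves; moreover, in any out-branching B of D(I) with exactly k leaves, the subtree of B rooted at each u_i is a directed path. -/
/-- `T` is an out-tree with root `root`: every vertex is reachable from the root,
the root has in-degree zero, every vertex has at most one in-neighbour, and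
there are no directed cycles. -/
def Digraph.IsOutTree {α : Type} (T : Digraph α) (root : α) : Prop :=
  (∀ v, Relation.ReflTransGen T.Adj root v) ∧
  (∀ v, ¬ T.Adj v root) ∧
  (∀ ⦃u u' v⦄, T.Adj u v → T.Adj u' v → u = u') ∧
  (∀ v, ¬ Relation.TransGen T.Adj v v)

/-- `B` is an out-branching of `D` with root `root`: a spanning subgraph of `D`
which is an out-tree. -/
def Digraph.IsOutBranching {α : Type} (D B : Digraph α) (root : α) : Prop :=
  (∀ ⦃u v⦄, B.Adj u v → D.Adj u v) ∧ B.IsOutTree root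

/-- The leaves of a digraph: the vertices of out-degree zero. -/
def Digraph.leaves {α : Type} (B : Digraph α) : Set α := {v | ∀ w, ¬ B.Adj v w}

/-- The vertices of the digraph `D(I)`: the root `r`, a vertex `u i` for each variable
`v^i`, and a copy of the gadget `H` for each clause `C j`. -/
inductive DV (k p : ℕ) : Type
  | r : DV k p
  | u : Fin k → DV k p
  | g : Fin p → GV → DV k p
  deriving DecidableEq, Fintype

/-- The entry vertex of a gadget corresponding to the literal in position `m`
(positions `0`, `1`, `2` correspond to `x`, `y`, `z`). -/
def fstV : Fin 3 → GV := ![GV.x1, GV.y1, GV.z1]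

/-- The exit vertex of a gadget corresponding to the literal in position `m`. -/
def sndV : Fin 3 → GV := ![GV.x2, GV.y2, GV.z2]

/-- A 3SAT instance on variables indexed by `Fin k` is a family of `p` clauses, each an
(ordered) triple of literals; a literal is a variable together with a polarity
(`true` = positive, `false` = negated). -/
abbrev Clauses (k p : ℕ) := Fin p → Fin 3 → Fin k × Bool

/-- The arcs of the digraph `D(I)` associated with the 3SAT instance `C`:
the arcs of each gadget copy `H_j`; the arcs `(r, u_i)`; for each literal `ℓ` of
variable `v^i`, an arc from `u_i` to the entry vertex of `ℓ` in the first clause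
containing `ℓ`, and an arc from the exit vertex of `ℓ` in a clause containing `ℓ`
to the entry vertex of `ℓ` in the next clause containing `ℓ`. -/
inductive DIAdj {k p : ℕ} (C : Clauses k p) : DV k p → DV k p → Prop
  | root (i : Fin k) : DIAdj C .r (.u i)
  | gadget (j : Fin p) {a b : GV} : gadgetH.Adj a b → DIAdj C (.g j a) (.g j b)
  | start (i : Fin k) (b : Bool) (j : Fin p) (m : Fin 3) :
      C j m = (i, b) → (∀ j' : Fin p, j' < j → ∀ m' : Fin 3, C j' m' ≠ (i, b)) →
      DIAdj C (.u i) (.g j (fstV m))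
  | chain (ℓ : Fin k × Bool) (j j' : Fin p) (m m' : Fin 3) :
      C j m = ℓ → C j' m' = ℓ → j < j' →
      (∀ j'' : Fin p, j < j'' → j'' < j' → ∀ m'' : Fin 3, C j'' m'' ≠ ℓ) →
      DIAdj C (.g j (sndV m)) (.g j' (fstV m'))

/-- The digraph `D(I)` associated with the 3SAT instance `C`. -/
def DI {k p : ℕ} (C : Clauses k p) : Digraph (DV k p) := ⟨DIAdj C⟩

/-- The 3SAT instance `C` is satisfiable. -/
def Sat {k p : ℕ} (C : Clauses k p) : Prop :=
  ∃ a : Fin k → Bool, ∀ j : Fin p, ∃ m : Fin 3, a (C j m).1 = (C j m).2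

open Relation in
lemma wf_transGen_flip {α : Type} [Finite α] {R : α → α → Prop}
    (hacyc : ∀ v, ¬ TransGen R v v) :
    WellFounded (fun a b => TransGen R b a) := by
  haveI : IsTrans α (fun a b => TransGen R b a) := ⟨fun a b c hab hbc => hbc.trans hab⟩
  haveI : IsIrrefl α (fun a b => TransGen R b a) := ⟨hacyc⟩
  exact Finite.wellFounded_of_trans_of_irrefl _

open Relation in
lemma exists_path_list {α : Type} [Finite α] (R : α → α → Prop)
    (hacyc : ∀ v, ¬ TransGen R v v) (start : α)
    (hdeg : ∀ v, ReflTransGen R start v → ∀ w1 w2, R v w1 → R v w2 → w1 = w2) :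
    ∃ l : List α, l.Chain' R ∧ l.Nodup ∧ l.head? = some start ∧
      ∀ v, v ∈ l ↔ ReflTransGen R start v := by
  classical
  have hwf := wf_transGen_flip hacyc
  suffices h : ∀ v, ReflTransGen R start v → ∃ l : List α, l.Chain' R ∧ l.Nodup ∧
      l.head? = some v ∧ ∀ x, x ∈ l ↔ ReflTransGen R v x from h start .refl
  intro v
  induction v using hwf.induction with
  | _ v ih =>
    intro hv
    by_cases h : ∃ w, R v w
    · obtain ⟨w, hw⟩ := h
      obtain ⟨l, hc, hnd, hhd, hmem⟩ := ih w (TransGen.single hw) (hv.tail hw)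
      refine ⟨v :: l, ?_, ?_, rfl, ?_⟩
      · rw [List.Chain', List.isChain_cons]
        refine ⟨fun b hb => ?_, hc⟩
        rw [hhd, Option.mem_some_iff] at hb
        exact hb ▸ hw
      · exact List.nodup_cons.mpr
          ⟨fun hvl => hacyc v (TransGen.head' hw ((hmem v).mp hvl)), hnd⟩
      · intro x
        simp only [List.mem_cons, hmem]
        constructor
        · rintro (rfl | hx)
          · exact .refl
          · exact ReflTransGen.head hw hx
        · intro hx
          rcases hx.cases_head with rfl | ⟨c, hc1, hc2⟩
          · exact Or.inl rfl
          · have : c = w := hdeg v hv c w hc1 hw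
            exact Or.inr (this ▸ hc2)
    · refine ⟨[v], List.isChain_singleton v, List.nodup_singleton v, rfl, fun x => ?_⟩
      simp only [List.mem_singleton]
      constructor
      · rintro rfl; exact .refl
      · intro hx
        rcases hx.cases_head with rfl | ⟨c, hc1, _⟩
        · rfl
        · exact absurd ⟨c, hc1⟩ h

/-- Every out-branching `B` of `D(I)` is rooted at `r`, contains every arc `(r, u_i)`,
and has at least `k` leaves; moreover, if `B` has exactly `k` leaves then the subtree
of `B` rooted at each `u_i` is a directed path. -/
theorem di_outbranching_structure (k p : ℕ) (C : Clauses k p)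
    (B : Digraph (DV k p)) (root : DV k p) (hB : (DI C).IsOutBranching B root) :
    root = DV.r ∧
    (∀ i : Fin k, B.Adj DV.r (DV.u i)) ∧
    k ≤ B.leaves.ncard ∧
    (B.leaves.ncard = k → ∀ i : Fin k,
      ∃ l : List (DV k p), l.Chain' B.Adj ∧ l.Nodup ∧ l.head? = some (DV.u i) ∧
        ∀ v, v ∈ l ↔ Relation.ReflTransGen B.Adj (DV.u i) v) := by
  classical
  open Relation in
  obtain ⟨hsub, hreach, _hroot_in, huniq, hacyc⟩ := hB
  -- the root is `r`
  have hroot : root = DV.r := by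
    rcases (hreach DV.r).cases_tail with h | ⟨c, _, hc⟩
    · exact h.symm
    · cases hsub hc
  subst hroot
  -- every arc (r, u i) is in B
  have hrU : ∀ i : Fin k, B.Adj DV.r (DV.u i) := by
    intro i
    rcases (hreach (DV.u i)).cases_tail with h | ⟨c, _, hc⟩
    · exact absurd h (by simp)
    · cases hsub hc with
      | root => exact hc
  -- from every vertex a leaf is reachable
  have hwf := wf_transGen_flip hacyc
  have exists_leaf : ∀ v : DV k p, ∃ w, ReflTransGen B.Adj v w ∧ w ∈ B.leaves := by
    intro v
    induction v using hwf.induction with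
    | _ v ih =>
      by_cases h : ∃ w, B.Adj v w
      · obtain ⟨w, hw⟩ := h
        obtain ⟨ℓ, hℓ1, hℓ2⟩ := ih w (TransGen.single hw)
        exact ⟨ℓ, ReflTransGen.head hw hℓ1, hℓ2⟩
      · exact ⟨v, .refl, fun w hw => h ⟨w, hw⟩⟩
  -- comparability of ancestors
  have compar : ∀ {a v : DV k p}, ReflTransGen B.Adj a v → ∀ {b : DV k p},
      ReflTransGen B.Adj b v →
      ReflTransGen B.Adj a b ∨ ReflTransGen B.Adj b a := by
    intro a v h
    induction h with
    | refl => intro b h2; exact Or.inr h2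
    | tail h1 hstep ih =>
      intro b h2
      rcases h2.cases_tail with rfl | ⟨c, hc, hcv⟩
      · exact Or.inl (h1.tail hstep)
      · exact ih (huniq hcv hstep ▸ hc)
  -- u i's are pairwise incomparable
  have key : ∀ (a b : Fin k), ReflTransGen B.Adj (DV.u a) (DV.u b) → a = b := by
    intro a b h
    rcases h.cases_tail with heq | ⟨c, hc, hcb⟩
    · exact (DV.u.injEq .. ▸ heq).symm
    · have hcr : c = DV.r := huniq hcb (hrU b)
      rw [hcr] at hc
      exact absurd (TransGen.head' (hrU a) hc) (hacyc _)
  have disj : ∀ (i i' : Fin k) (v : DV k p), ReflTransGen B.Adj (DV.u i) v →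
      ReflTransGen B.Adj (DV.u i') v → i = i' := by
    intro i i' v h h'
    rcases compar h h' with h2 | h2
    · exact key _ _ h2
    · exact (key _ _ h2).symm
  -- a distinct leaf reachable from each u i
  choose f hf1 hf2 using fun i : Fin k => exists_leaf (DV.u i)
  set g : Fin k → B.leaves := fun i => ⟨f i, hf2 i⟩ with hg
  have hginj : Function.Injective g := by
    intro i i' h
    have hfe : f i = f i' := congrArg Subtype.val h
    exact disj i i' (f i) (hf1 i) (hfe ▸ hf1 i')
  have hkcard : k ≤ B.leaves.ncard := by
    have h1 := Nat.card_le_card_of_injective g hginj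
    rw [Nat.card_coe_set_eq] at h1
    simpa [Nat.card_eq_fintype_card] using h1
  refine ⟨rfl, hrU, hkcard, ?_⟩
  intro hcard i
  -- with exactly k leaves, g is surjective
  have hgsurj : Function.Surjective g := by
    have hcards : Nat.card (Fin k) = Nat.card ↥B.leaves := by
      rw [Nat.card_coe_set_eq, hcard]
      simp [Nat.card_eq_fintype_card]
    exact ((Nat.bijective_iff_injective_and_card g).mpr ⟨hginj, hcards⟩).2
  -- out-degree at most one within the subtree of u i
  have hdeg : ∀ v : DV k p, ReflTransGen B.Adj (DV.u i) v →
      ∀ w1 w2, B.Adj v w1 → B.Adj v w2 → w1 = w2 := by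
    intro v hv w1 w2 h1 h2
    by_contra hne
    obtain ⟨l1, hl1, hm1⟩ := exists_leaf w1
    obtain ⟨l2, hl2, hm2⟩ := exists_leaf w2
    have hfix : ∀ (w ℓ : DV k p), B.Adj v w → ReflTransGen B.Adj w ℓ →
        ℓ ∈ B.leaves → ℓ = f i := by
      intro w ℓ hw hℓ hmem
      obtain ⟨i', hi'⟩ := hgsurj ⟨ℓ, hmem⟩
      have heq : f i' = ℓ := congrArg Subtype.val hi'
      have hii : i' = i := disj i' i ℓ (heq ▸ hf1 i') ((hv.tail hw).trans hℓ)
      rw [← heq, hii]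
    have e1 := hfix w1 l1 h1 hl1 hm1
    have e2 := hfix w2 l2 h2 hl2 hm2
    rw [e2, ← e1] at hl2
    have cyc : ∀ (a b : DV k p), B.Adj v a → B.Adj v b → a ≠ b →
        ReflTransGen B.Adj a b → False := by
      intro a b ha hb hab h
      rcases h.cases_tail with heq | ⟨c, hc1, hc2⟩
      · exact hab heq.symm
      · have : c = v := huniq hc2 hb
        rw [this] at hc1
        exact hacyc _ (TransGen.head' ha hc1)
    rcases compar hl1 hl2 with h | h
    · exact cyc w1 w2 h1 h2 hne h
    · exact cyc w2 w1 h2 h1 (Ne.symm hne) h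
  exact exists_path_list B.Adj hacyc (DV.u i) hdeg
end
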